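/- Let K be a field, G ∈ K[[x]]^{q×p} a matrix over formal power series, t̄ ∈ ℤ^q, and δ an integer. Assume that the K[x]-module {v ∈ K[x]^q : vG = 0} admits a minimal basis (with respect to the t̄-degree) of which exactly κ elements have t̄-degree at most δ. Let L ∈ K[x]^{q×q} be a σ-basis for G with respect to t̄ of order at least δ+1. Then at least κ rows of L have t̄-degree at most δ. -/

import Mathlib

open Polynomial Matrix

namespace PolyNull

variable {K : Type*} [Field K]

/-- Degree of a polynomial row vector: max of `natDegree` of its entries. -/
noncomputable def vecDeg {m : Type*} [Fintype m] (v : m → Polynomial K) : ℕ :=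
  Finset.univ.sup fun i => (v i).natDegree

/-- Degree of a polynomial matrix: max of degrees of its entries. -/
noncomputable def matDeg {m n : Type*} [Fintype m] [Fintype n]
    (M : Matrix m n (Polynomial K)) : ℕ :=
  Finset.univ.sup fun ij : m × n => (M ij.1 ij.2).natDegree

/-- View a polynomial matrix as a matrix over the rational function field `K(x)`. -/
noncomputable def ratMat {m n : Type*} (M : Matrix m n (Polynomial K)) :
    Matrix m n (RatFunc K) :=
  M.map (algebraMap (Polynomial K) (RatFunc K))

/-- Rank of a polynomial matrix (its rank over `K(x)`). -/
noncomputable def polyRank {m n : Type*} [Fintype m] [Fintype n]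
    (M : Matrix m n (Polynomial K)) : ℕ :=
  (ratMat M).rank

/-- The left nullspace `K[x]`-module of a polynomial matrix. -/
noncomputable def leftNullMod {m n : Type*} [Fintype m] (M : Matrix m n (Polynomial K)) :
    Submodule (Polynomial K) (m → Polynomial K) :=
  LinearMap.ker M.vecMulLinear

/-- `N` is a family of rows forming a basis of the left nullspace module of `M`. -/
def IsNullBasis {m n ι : Type*} [Fintype m] (M : Matrix m n (Polynomial K))
    (N : ι → (m → Polynomial K)) : Prop :=
  LinearIndependent (Polynomial K) N ∧
    Submodule.span (Polynomial K) (Set.range N) = leftNullMod M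

/-- Minimal basis of the left nullspace module: a basis whose sorted row degrees are
pointwise minimal among all bases; equivalently (order-free formulation), for every
degree threshold it has at least as many rows of degree at most the threshold as
any other basis. -/
def IsMinimalNullBasis {m n ι : Type*} [Fintype m] [Fintype ι]
    (M : Matrix m n (Polynomial K)) (N : ι → (m → Polynomial K)) : Prop :=
  IsNullBasis M N ∧
    ∀ N' : ι → (m → Polynomial K), IsNullBasis M N' →
      ∀ δ : ℕ, (Finset.univ.filter fun i => vecDeg (N' i) ≤ δ).card
        ≤ (Finset.univ.filter fun i => vecDeg (N i) ≤ δ).card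

open scoped Classical in
/-- McMillan degree of a rank-`r` polynomial matrix: the maximum of the degrees of the
determinants of its `r × r` submatrices. -/
noncomputable def mcMillanDeg {m n : Type*} [Fintype m] [Fintype n]
    (M : Matrix m n (Polynomial K)) (r : ℕ) : ℕ :=
  Finset.univ.sup fun fg : (Fin r → m) × (Fin r → n) =>
    if Function.Injective fg.1 ∧ Function.Injective fg.2 then
      (M.submatrix fg.1 fg.2).det.natDegree
    else 0

/-- Rank of the evaluation of a polynomial matrix at a point of the algebraic closure. -/
noncomputable def evalRank {m n : Type*} [Fintype n]
    (M : Matrix m n (Polynomial K)) (x₀ : AlgebraicClosure K) : ℕ :=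
  (M.map fun f => Polynomial.aeval x₀ f).rank

/-- A polynomial matrix is irreducible (for its rank `r`) if it has rank `r` at every
point of the algebraic closure of `K`. -/
def IsIrreducibleMat {m n : Type*} [Fintype n]
    (M : Matrix m n (Polynomial K)) (r : ℕ) : Prop :=
  ∀ x₀ : AlgebraicClosure K, evalRank M x₀ = r

/-- Leading row coefficient matrix of a polynomial matrix. -/
noncomputable def leadingRowMatrix {k m : Type*} [Fintype m]
    (N : Matrix k m (Polynomial K)) : Matrix k m K :=
  fun i j => (N i j).coeff (vecDeg (N i))

/-- A polynomial matrix is row-reduced if its leading row coefficient matrix has full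
row rank. -/
def IsRowReduced {k m : Type*} [Fintype k] [Fintype m]
    (N : Matrix k m (Polynomial K)) : Prop :=
  (leadingRowMatrix N).rank = Fintype.card k

/-- `S` and `N` are left coprime: every non-singular common left divisor is unimodular. -/
def LeftCoprime {p n : Type*} [Fintype p] [DecidableEq p]
    (S : Matrix p p (Polynomial K)) (N : Matrix p n (Polynomial K)) : Prop :=
  ∀ U : Matrix p p (Polynomial K), U.det ≠ 0 →
    (∃ S', S = U * S') → (∃ N', N = U * N') → IsUnit U.det

/-- `C` and `T` are right coprime: every non-singular common right divisor is unimodular. -/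
def RightCoprime {p n : Type*} [Fintype p] [DecidableEq p]
    (C : Matrix n p (Polynomial K)) (T : Matrix p p (Polynomial K)) : Prop :=
  ∀ U : Matrix p p (Polynomial K), U.det ≠ 0 →
    (∃ C', C = C' * U) → (∃ T', T = T' * U) → IsUnit U.det

open scoped Classical in
/-- `t`-shifted degree of a polynomial row vector, with value `⊥` on the zero vector. -/
noncomputable def tDeg {q : Type*} [Fintype q] (t : q → ℤ) (v : q → Polynomial K) :
    WithBot ℤ :=
  Finset.univ.sup fun i =>
    if v i = 0 then (⊥ : WithBot ℤ) else ((((v i).natDegree : ℤ) - t i : ℤ) : WithBot ℤ)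

open scoped Classical in
/-- Degree of a polynomial as an element of `WithBot ℤ`. -/
noncomputable def pdegZ (a : Polynomial K) : WithBot ℤ :=
  if a = 0 then ⊥ else ((a.natDegree : ℤ) : WithBot ℤ)

/-- `t`-minimal basis of the left nullspace module of a polynomial matrix: a basis whose
sorted `t`-degrees are pointwise minimal among all bases (order-free formulation). -/
def IsTMinimalNullBasis {m n ι : Type*} [Fintype m] [Fintype ι] (t : m → ℤ)
    (M : Matrix m n (Polynomial K)) (N : ι → (m → Polynomial K)) : Prop :=
  IsNullBasis M N ∧
    ∀ N' : ι → (m → Polynomial K), IsNullBasis M N' →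
      ∀ δ : ℤ, (Finset.univ.filter fun i => tDeg t (N' i) ≤ (δ : WithBot ℤ)).card
        ≤ (Finset.univ.filter fun i => tDeg t (N i) ≤ (δ : WithBot ℤ)).card

/-- The coercion of a polynomial to a power series, as a ring homomorphism. -/
noncomputable def polyPS : Polynomial K →+* PowerSeries K :=
  Polynomial.coeToPowerSeries.ringHom

/-- σ-basis (minimal approximant basis) of order `d` with respect to the shift `t`
for a power series matrix `G`: (i) each row of `L` annihilates `G` modulo `x^d`;
(ii) every polynomial row vector annihilating `G` modulo `x^d` has a unique
decomposition over the rows of `L` respecting the `t`-degrees. -/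
def IsSigmaBasis {q p : Type*} [Fintype q] (t : q → ℤ)
    (G : Matrix q p (PowerSeries K)) (d : ℕ) (L : Matrix q q (Polynomial K)) : Prop :=
  (∀ (i : q) (j : p) (e : ℕ), e < d →
      PowerSeries.coeff e (Matrix.vecMul (fun l => polyPS (L i l)) G j) = 0) ∧
  ∀ v : q → Polynomial K,
    (∀ (j : p) (e : ℕ), e < d →
        PowerSeries.coeff e (Matrix.vecMul (fun l => polyPS (v l)) G j) = 0) →
    ∃! α : q → Polynomial K,
      v = ∑ i, α i • (L i) ∧ ∀ i, pdegZ (α i) + tDeg t (L i) ≤ tDeg t v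

/-- The `K[x]`-module of polynomial vectors in the left kernel of a power series matrix. -/
noncomputable def psNullMod {q p : Type*} [Fintype q]
    (G : Matrix q p (PowerSeries K)) :
    Submodule (Polynomial K) (q → Polynomial K) where
  carrier := {v | ∀ j, ∑ i, polyPS (v i) * G i j = 0}
  zero_mem' := by intro j; simp
  add_mem' := by
    intro a b ha hb j
    simp only [Pi.add_apply, map_add, add_mul, Finset.sum_add_distrib, ha j, hb j, add_zero]
  smul_mem' := by
    intro c a ha j
    simp only [Pi.smul_apply, smul_eq_mul, _root_.map_mul, mul_assoc, ← Finset.mul_sum,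
      ha j, mul_zero]

/-- Minimal basis of a `K[x]`-submodule of `K[x]^q` with respect to the `t`-degree
(order-free formulation via counting rows below every threshold). -/
def IsTMinBasisOf {q ι : Type*} [Fintype q] [Fintype ι] (t : q → ℤ)
    (W : Submodule (Polynomial K) (q → Polynomial K)) (N : ι → (q → Polynomial K)) : Prop :=
  (LinearIndependent (Polynomial K) N ∧ Submodule.span (Polynomial K) (Set.range N) = W) ∧
    ∀ N' : ι → (q → Polynomial K),
      (LinearIndependent (Polynomial K) N' ∧
        Submodule.span (Polynomial K) (Set.range N') = W) →
      ∀ δ : ℤ, (Finset.univ.filter fun i => tDeg t (N' i) ≤ (δ : WithBot ℤ)).card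
        ≤ (Finset.univ.filter fun i => tDeg t (N i) ≤ (δ : WithBot ℤ)).card

/-!
A vector of the kernel module annihilates `G` exactly, hence modulo `x^d` for every `d`, so the
σ-basis property writes it as a `K[x]`-combination of rows of `L` whose `t`-degree does not exceed
its own. The members of the minimal basis of `t`-degree at most `δ` are thus linearly independent
vectors in the span of the rows of `L` of `t`-degree at most `δ`, and over `K[x]` (which has the
strong rank condition) there can be no more of them than there are such rows.
-/

theorem card_le_card_of_linearIndependent_of_mem_span {R M ι κ : Type*} [Ring R]
    [StrongRankCondition R] [AddCommGroup M] [Module R M] {v : ι → M}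
    (hv : LinearIndependent R v) (s : Finset ι) (w : κ → M) (u : Finset κ)
    (hs : ∀ i ∈ s, v i ∈ Submodule.span R (w '' u)) : s.card ≤ u.card := by
  classical
  have hspan : Set.range (fun i : s => v i) ≤ Submodule.span R (u.image w : Set M) := by
    rintro _ ⟨i, rfl⟩
    rw [SetLike.mem_coe, Finset.coe_image]
    exact hs i i.2
  calc s.card = Fintype.card s := (Fintype.card_coe s).symm
    _ ≤ Fintype.card (u.image w : Set M) :=
      linearIndependent_le_span_aux' _ (hv.comp _ Subtype.val_injective) _ hspan
    _ = (u.image w).card := by simp only [Finset.coe_sort_coe, Fintype.card_coe]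
    _ ≤ u.card := Finset.card_image_le

theorem le_pdegZ_add_of_ne_zero {a : K[X]} (ha : a ≠ 0) (x : WithBot ℤ) :
    x ≤ pdegZ a + x := by
  refine le_add_of_nonneg_left ?_
  rw [pdegZ, if_neg ha]
  exact_mod_cast Int.natCast_nonneg _

theorem coeff_vecMul_eq_zero_of_mem_psNullMod {q p : Type*} [Fintype q]
    {G : Matrix q p (PowerSeries K)} {v : q → K[X]} (hv : v ∈ psNullMod G) (j : p) (e : ℕ) :
    PowerSeries.coeff e (vecMul (fun l => polyPS (v l)) G j) = 0 := by
  have hzero : vecMul (fun l => polyPS (v l)) G j = 0 := by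
    simpa only [vecMul, dotProduct] using hv j
  rw [hzero, map_zero]

theorem IsSigmaBasis.mem_span_rows_of_tDeg_le {q p : Type*} [Fintype q] {t : q → ℤ}
    {G : Matrix q p (PowerSeries K)} {d : ℕ} {L : Matrix q q K[X]} (hL : IsSigmaBasis t G d L)
    {v : q → K[X]}
    (hv : ∀ (j : p) (e : ℕ), e < d → PowerSeries.coeff e (vecMul (fun l => polyPS (v l)) G j) = 0)
    {b : WithBot ℤ} (hb : tDeg t v ≤ b) :
    v ∈ Submodule.span K[X] (L '' {i | tDeg t (L i) ≤ b}) := by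
  obtain ⟨α, ⟨hvα, hdeg⟩, -⟩ := hL.2 v hv
  rw [hvα]
  refine Submodule.sum_mem _ fun i _ => ?_
  by_cases hαi : α i = 0
  · rw [hαi, zero_smul]
    exact Submodule.zero_mem _
  · refine Submodule.smul_mem _ _ (Submodule.subset_span ⟨i, ?_, rfl⟩)
    exact (le_pdegZ_add_of_ne_zero hαi _).trans ((hdeg i).trans (hvα ▸ hb))

theorem sigma_basis_contains_minimal_vectors_general
    {q p k κ : ℕ} (t : Fin q → ℤ)
    (G : Matrix (Fin q) (Fin p) (PowerSeries K)) (δ : ℤ) (d : ℕ)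
    (N : Fin k → (Fin q → Polynomial K)) (hN : IsTMinBasisOf t (psNullMod G) N)
    (hκ : (Finset.univ.filter fun i => tDeg t (N i) ≤ (δ : WithBot ℤ)).card = κ)
    (L : Matrix (Fin q) (Fin q) (Polynomial K)) (hL : IsSigmaBasis t G d L) :
    κ ≤ (Finset.univ.filter fun i => tDeg t (L i) ≤ (δ : WithBot ℤ)).card := by
  rw [← hκ]
  refine card_le_card_of_linearIndependent_of_mem_span hN.1.1 _ L _ fun i hi => ?_
  have hNi : N i ∈ psNullMod G := hN.1.2 ▸ Submodule.subset_span ⟨i, rfl⟩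
  simpa only [Finset.coe_filter, Finset.mem_univ, true_and] using
    hL.mem_span_rows_of_tDeg_le (fun j e _ => coeff_vecMul_eq_zero_of_mem_psNullMod hNi j e)
      (Finset.mem_filter.mp hi).2

/-- If the left kernel module of a power series matrix `G` has a
`t̄`-minimal basis with exactly `κ` elements of `t̄`-degree at most `δ`, then any
σ-basis for `G` with respect to `t̄` of order at least `δ + 1` has at least `κ` rows
of `t̄`-degree at most `δ`. -/
theorem sigma_basis_contains_minimal_vectors
    {q p k κ : ℕ} (t : Fin q → ℤ)
    (G : Matrix (Fin q) (Fin p) (PowerSeries K)) (δ : ℤ) (d : ℕ)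
    (hd : δ + 1 ≤ (d : ℤ))
    (N : Fin k → (Fin q → Polynomial K)) (hN : IsTMinBasisOf t (psNullMod G) N)
    (hκ : (Finset.univ.filter fun i => tDeg t (N i) ≤ (δ : WithBot ℤ)).card = κ)
    (L : Matrix (Fin q) (Fin q) (Polynomial K)) (hL : IsSigmaBasis t G d L) :
    κ ≤ (Finset.univ.filter fun i => tDeg t (L i) ≤ (δ : WithBot ℤ)).card :=
  sigma_basis_contains_minimal_vectors_general t G δ d N hN hκ L hL

end PolyNull
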